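/- Let t ↦ (x_t, y_t) be the unique solution of the ODE ż = B(z) with initial condition (x∘, y∘) ∈ S, which is defined for all t ≥ 0. Then (x_t, y_t) → (x_∞, 0) as t → ∞; i.e., the equilibrium (x_∞, 0) is globally asymptotically stable for the dynamics on S. -/

import Mathlib

open Real Set Filter Topology

noncomputable def V (x : ℝ) : ℝ := Real.tanh (x - 2) - Real.tanh (-2)

noncomputable def artanh (v : ℝ) : ℝ := (1 / 2) * Real.log ((1 + v) / (1 - v))

/-- The equilibrium following distance `x_∞`. -/
noncomputable def xInf (d v₀ : ℝ) : ℝ := d * (2 + _root_.artanh (v₀ + Real.tanh (-2)))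

/-!
Write `F(s) = V(s/d) - v∘`, which is strictly increasing and vanishes at `x_∞`, and let
`W(z) = ∫_{x_∞}^z F`. The energy `E = y²/2 + α W(x)` satisfies `Ė = -(α + β/x²) y² ≤ 0`, so
`∫₀^∞ y² ≤ E(0)/α`; as `d(y²)/dt ≤ α sup F² / 2`, this forces `y → 0`. If `E` stayed above some
`η > 0`, then `x` would eventually stay on one side of `x_∞` at positive distance, and the Liénard
variable `y + αx - β/x`, whose derivative is `-α F(x)`, would drift linearly to `±∞`; but it is
bounded above while `x < x_∞` and bounded below while `x > x_∞`. Hence `E`, and with it `W(x)`,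
becomes arbitrarily small, which forces `x → x_∞`.
-/

open MeasureTheory

lemma Real.tanh_strictMono : StrictMono tanh := fun a b hab => by
  by_contra! h
  have := artanh_le_artanh (neg_one_lt_tanh b) (tanh_lt_one a) h
  rw [artanh_tanh, artanh_tanh] at this
  exact hab.not_ge this

@[fun_prop]
lemma Real.continuous_tanh : Continuous tanh := by
  rw [show tanh = fun x => sinh x / cosh x from funext tanh_eq_sinh_div_cosh]
  exact continuous_sinh.div continuous_cosh fun x => (cosh_pos x).ne'

lemma V_strictMono : StrictMono V := fun _ _ h =>
  sub_lt_sub_right (tanh_strictMono (sub_lt_sub_right h 2)) _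

@[fun_prop]
lemma continuous_V : Continuous V := by
  unfold V
  fun_prop

lemma abs_V_le (z : ℝ) : |V z| ≤ 2 := by
  have h₁ := abs_tanh_lt_one (z - 2)
  have h₂ := abs_tanh_lt_one (-2)
  exact (abs_sub _ _).trans (by linarith)

lemma V_div_xInf {d v₀ : ℝ} (hd : d ≠ 0) (hv₀ : v₀ ∈ Ioo 0 (1 + tanh 2)) :
    V (xInf d v₀ / d) = v₀ := by
  set w := v₀ + tanh (-2)
  have hw : w ∈ Ioo (-1) 1 := by
    have := neg_one_lt_tanh (-2)
    simp only [w, tanh_neg] at this ⊢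
    exact ⟨by linarith [hv₀.1], by linarith [hv₀.2]⟩
  have hartanh : _root_.artanh w = Real.artanh w :=
    (artanh_eq_half_log (Ioo_subset_Icc_self hw)).symm
  rw [V, xInf, mul_div_cancel_left₀ _ hd, add_sub_cancel_left, hartanh, tanh_artanh hw]
  ring

lemma xInf_pos {d v₀ : ℝ} (hd : 0 < d) (hv₀ : v₀ ∈ Ioo 0 (1 + tanh 2)) : 0 < xInf d v₀ := by
  have : V 0 < V (xInf d v₀ / d) := by
    rw [V_div_xInf hd.ne' hv₀]
    simpa [V] using hv₀.1
  exact (div_pos_iff_of_pos_right hd).1 (V_strictMono.lt_iff_lt.1 this)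

lemma forall_le_or_forall_ge_of_continuousOn_Ici {f : ℝ → ℝ} {T p q : ℝ}
    (hf : ContinuousOn f (Ici T)) (hpq : p < q) (hgap : ∀ t ≥ T, f t ∉ Ioo p q) :
    (∀ t ≥ T, f t ≤ p) ∨ (∀ t ≥ T, q ≤ f t) := by
  by_contra! h
  obtain ⟨⟨t₁, ht₁, hp⟩, ⟨t₂, ht₂, hq⟩⟩ := h
  have hq₁ : q ≤ f t₁ := by by_contra! h; exact hgap t₁ ht₁ ⟨hp, h⟩
  have hp₂ : f t₂ ≤ p := by by_contra! h; exact hgap t₂ ht₂ ⟨h, hq⟩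
  obtain ⟨s, hs, hfs⟩ := (isPreconnected_Ici.image f hf).ordConnected.out
    (mem_image_of_mem f ht₂) (mem_image_of_mem f ht₁)
    (show (p + q) / 2 ∈ Icc (f t₂) (f t₁) from ⟨by linarith, by linarith⟩)
  exact hgap s hs (hfs ▸ ⟨by linarith, by linarith⟩)

lemma tendsto_atTop_of_le_deriv {z z' : ℝ → ℝ} {T c : ℝ} (hc : 0 < c)
    (hz : ∀ t ≥ T, HasDerivAt z (z' t) t) (hcz : ∀ t ≥ T, c ≤ z' t) :
    Tendsto z atTop atTop := by
  have hlin : ∀ t ≥ T, c * (t - T) ≤ z t - z T := fun t ht =>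
    (convex_Ici T).mul_sub_le_image_sub_of_le_deriv (HasDerivAt.continuousOn hz)
      (fun s hs => (hz s (interior_subset hs)).differentiableAt.differentiableWithinAt)
      (fun s hs => (hz s (interior_subset hs)).deriv ▸ hcz s (interior_subset hs))
      T self_mem_Ici t ht ht
  refine tendsto_atTop_mono' atTop ?_ (tendsto_atTop_add_const_left atTop (z T)
    ((tendsto_atTop_add_const_right atTop (-T) tendsto_id).const_mul_atTop hc))
  filter_upwards [eventually_ge_atTop T] with t ht
  simp only [id]
  linarith [hlin t ht]

/-- A Barbalat-type lemma: `h` cannot climb to a height `ε` without having spent a time `≍ ε`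
above `ε / 2`, which integrability forbids in the long run. -/
lemma tendsto_zero_of_integrableOn_of_deriv_le {h h' : ℝ → ℝ} {a C : ℝ}
    (hnonneg : ∀ t ≥ a, 0 ≤ h t) (hderiv : ∀ t ≥ a, HasDerivAt h (h' t) t)
    (hC : ∀ t ≥ a, h' t ≤ C) (hint : IntegrableOn h (Ioi a)) :
    Tendsto h atTop (𝓝 0) := by
  obtain ⟨C, hC₀, hC⟩ : ∃ C > 0, ∀ t ≥ a, h' t ≤ C :=
    ⟨max C 1, by positivity, fun t ht => (hC t ht).trans (le_max_left _ _)⟩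
  have hII : ∀ t ≥ a, IntervalIntegrable h volume a t := fun t ht =>
    (intervalIntegrable_iff_integrableOn_Ioc_of_le ht).2 (hint.mono_set Ioc_subset_Ioi_self)
  have hwindow : ∀ τ ≥ 0, Tendsto (fun t => ∫ s in (t - τ)..t, h s) atTop (𝓝 0) := by
    intro τ hτ
    have hshift : Tendsto (fun t => t - τ) atTop atTop := by
      simpa only [id, sub_eq_add_neg] using tendsto_atTop_add_const_right atTop (-τ) tendsto_id
    have := (intervalIntegral_tendsto_integral_Ioi a hint tendsto_id).sub
      (intervalIntegral_tendsto_integral_Ioi a hint hshift)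
    rw [sub_self] at this
    refine this.congr' ?_
    filter_upwards [eventually_ge_atTop (a + τ)] with t ht
    exact intervalIntegral.integral_interval_sub_left (hII t (by linarith)) (hII _ (by linarith))
  have hwindow_ge : ∀ τ > 0, ∀ t ≥ a + τ, τ * (h t - C * τ) ≤ ∫ s in (t - τ)..t, h s := by
    intro τ hτ t ht
    have hslow : ∀ s ∈ Icc (t - τ) t, h t - C * τ ≤ h s := fun s hs => by
      have := (convex_Ici a).image_sub_le_mul_sub_of_deriv_le (HasDerivAt.continuousOn hderiv)
        (fun r hr => (hderiv r (interior_subset hr)).differentiableAt.differentiableWithinAt)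
        (fun r hr => (hderiv r (interior_subset hr)).deriv ▸ hC r (interior_subset hr))
        s (by simp only [mem_Ici]; linarith [hs.1]) t (by simp only [mem_Ici]; linarith) hs.2
      nlinarith [hs.1]
    calc τ * (h t - C * τ) = ∫ _ in (t - τ)..t, (h t - C * τ) := by
          rw [intervalIntegral.integral_const, smul_eq_mul]; ring
      _ ≤ ∫ s in (t - τ)..t, h s := intervalIntegral.integral_mono_on (by linarith)
          intervalIntegrable_const ((hII _ (by linarith)).symm.trans (hII t (by linarith))) hslow
  refine tendsto_order.2 ⟨fun b hb => ?_, fun ε hε => ?_⟩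
  · filter_upwards [eventually_ge_atTop a] with t ht
    exact hb.trans_le (hnonneg t ht)
  · set τ := ε / (2 * C)
    have hτ : 0 < τ := by positivity
    have hCτ : C * τ = ε / 2 := by simp only [τ]; field_simp
    filter_upwards [(hwindow τ hτ.le).eventually_lt_const (by positivity : 0 < τ * (ε / 2)),
      eventually_ge_atTop (a + τ)] with t hsmall ht
    have := (hwindow_ge τ hτ t ht).trans_lt hsmall
    rw [hCτ] at this
    nlinarith

structure IsRestoringForce (F : ℝ → ℝ) (a : ℝ) : Prop where
  continuous : Continuous F
  strictMono : StrictMono F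
  apply_eq_zero : F a = 0

noncomputable def potential (F : ℝ → ℝ) (a z : ℝ) : ℝ := ∫ s in a..z, F s

section Potential

variable {F : ℝ → ℝ} {a : ℝ}

lemma hasDerivAt_potential (hF : Continuous F) (z : ℝ) : HasDerivAt (potential F a) (F z) z :=
  (hF.integral_hasStrictDerivAt a z).hasDerivAt

lemma continuous_potential (hF : Continuous F) : Continuous (potential F a) :=
  continuous_iff_continuousAt.2 fun z => (hasDerivAt_potential hF z).continuousAt

@[simp]
lemma potential_self : potential F a a = 0 := intervalIntegral.integral_same

namespace IsRestoringForce

lemma strictMonoOn_potential (hF : IsRestoringForce F a) :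
    StrictMonoOn (potential F a) (Ici a) :=
  strictMonoOn_of_deriv_pos (convex_Ici a) (continuous_potential hF.continuous).continuousOn
    fun z hz => by
      rw [interior_Ici] at hz
      rw [(hasDerivAt_potential hF.continuous z).deriv, ← hF.apply_eq_zero]
      exact hF.strictMono hz

lemma strictAntiOn_potential (hF : IsRestoringForce F a) :
    StrictAntiOn (potential F a) (Iic a) :=
  strictAntiOn_of_deriv_neg (convex_Iic a) (continuous_potential hF.continuous).continuousOn
    fun z hz => by
      rw [interior_Iic] at hz
      rw [(hasDerivAt_potential hF.continuous z).deriv, ← hF.apply_eq_zero]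
      exact hF.strictMono hz

lemma potential_nonneg (hF : IsRestoringForce F a) (z : ℝ) : 0 ≤ potential F a z := by
  rcases le_total a z with h | h
  · simpa using hF.strictMonoOn_potential.monotoneOn self_mem_Ici h h
  · simpa using hF.strictAntiOn_potential.antitoneOn h self_mem_Iic h

lemma tendsto_of_tendsto_potential (hF : IsRestoringForce F a) {ι : Type*} {l : Filter ι}
    {g : ι → ℝ} (h : Tendsto (fun i => potential F a (g i)) l (𝓝 0)) : Tendsto g l (𝓝 a) := by
  refine tendsto_order.2 ⟨fun b hb => ?_, fun b hb => ?_⟩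
  · have hWb : 0 < potential F a b := by
      simpa using hF.strictAntiOn_potential hb.le self_mem_Iic hb
    filter_upwards [h.eventually_lt_const hWb] with i hi
    by_contra! hib
    exact hi.not_ge (hF.strictAntiOn_potential.antitoneOn (hib.trans hb.le) hb.le hib)
  · have hWb : 0 < potential F a b := by
      simpa using hF.strictMonoOn_potential self_mem_Ici hb.le hb
    filter_upwards [h.eventually_lt_const hWb] with i hi
    by_contra! hib
    exact hi.not_ge (hF.strictMonoOn_potential.monotoneOn hb.le (hb.le.trans hib) hib)

end IsRestoringForce

end Potential

def IsForwardSolution (α β : ℝ) (F x y : ℝ → ℝ) : Prop :=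
  ∀ t, 0 ≤ t → 0 < x t ∧ HasDerivAt x (y t) t ∧
    HasDerivAt y (-α * (F (x t) + y t) - β * y t / x t ^ 2) t

noncomputable def energy (α a : ℝ) (F x y : ℝ → ℝ) (t : ℝ) : ℝ :=
  y t ^ 2 / 2 + α * potential F a (x t)

lemma energy_nonneg {α a : ℝ} {F : ℝ → ℝ} (x y : ℝ → ℝ) (hα : 0 ≤ α)
    (hF : IsRestoringForce F a) (t : ℝ) : 0 ≤ energy α a F x y t := by
  have := hF.potential_nonneg (x t)
  unfold energy
  positivity

namespace IsForwardSolution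

variable {α β a : ℝ} {F x y : ℝ → ℝ}

lemma continuousOn_velocity (hs : IsForwardSolution α β F x y) : ContinuousOn y (Ici 0) :=
  HasDerivAt.continuousOn fun t ht => (hs t ht).2.2

lemma hasDerivAt_energy (hs : IsForwardSolution α β F x y) (hF : Continuous F) {t : ℝ}
    (ht : 0 ≤ t) : HasDerivAt (energy α a F x y) (-((α + β / x t ^ 2) * y t ^ 2)) t := by
  obtain ⟨hx, hdx, hdy⟩ := hs t ht
  refine (((hdy.pow 2).div_const 2).add
    (((hasDerivAt_potential hF (x t)).comp t hdx).const_mul α)).congr_deriv ?_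
  field_simp
  ring

lemma antitoneOn_energy (hs : IsForwardSolution α β F x y) (hF : Continuous F) (hα : 0 ≤ α)
    (hβ : 0 ≤ β) : AntitoneOn (energy α a F x y) (Ici 0) :=
  antitoneOn_of_hasDerivWithinAt_nonpos (convex_Ici 0)
    (HasDerivAt.continuousOn fun t ht => hs.hasDerivAt_energy hF ht)
    (fun t ht => (hs.hasDerivAt_energy hF (interior_subset ht)).hasDerivWithinAt)
    fun t ht => by
      have := (hs t (interior_subset ht)).1
      simp only [neg_nonpos]
      positivity

lemma integral_sq_velocity_le (hs : IsForwardSolution α β F x y) (hF : IsRestoringForce F a)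
    (hα : 0 < α) (hβ : 0 ≤ β) {t : ℝ} (ht : 0 ≤ t) :
    ∫ s in (0 : ℝ)..t, y s ^ 2 ≤ energy α a F x y 0 / α := by
  have hdiss : ∫ s in (0 : ℝ)..t, α * y s ^ 2 ≤ -energy α a F x y t - -energy α a F x y 0 :=
    intervalIntegral.integral_le_sub_of_hasDeriv_right_of_le ht
      (HasDerivAt.continuousOn fun s hs' => (hs.hasDerivAt_energy hF.continuous hs'.1).neg)
      (fun s hs' => (hs.hasDerivAt_energy hF.continuous hs'.1.le).neg.hasDerivWithinAt)
      ((hs.continuousOn_velocity.mono Icc_subset_Ici_self).pow 2 |>.const_smul α).integrableOn_Icc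
      fun s hs' => by
        have := (hs s hs'.1.le).1
        have : 0 ≤ β / x s ^ 2 * y s ^ 2 := by positivity
        linarith
  rw [intervalIntegral.integral_const_mul] at hdiss
  rw [le_div_iff₀ hα]
  linarith [energy_nonneg x y hα.le hF t]

lemma integrableOn_sq_velocity (hs : IsForwardSolution α β F x y) (hF : IsRestoringForce F a)
    (hα : 0 < α) (hβ : 0 ≤ β) : IntegrableOn (fun t => y t ^ 2) (Ioi 0) :=
  integrableOn_Ioi_of_intervalIntegral_norm_bounded (energy α a F x y 0 / α) 0
    (fun t => ((hs.continuousOn_velocity.mono Icc_subset_Ici_self).pow 2).integrableOn_Icc.mono_set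
      Ioc_subset_Icc_self) tendsto_id
    (by
      filter_upwards [eventually_ge_atTop 0] with t ht
      simpa only [id, norm_pow, Real.norm_eq_abs, sq_abs] using
        hs.integral_sq_velocity_le hF hα hβ ht)

lemma tendsto_velocity (hs : IsForwardSolution α β F x y) (hF : IsRestoringForce F a) {M : ℝ}
    (hM : ∀ z, |F z| ≤ M) (hα : 0 < α) (hβ : 0 ≤ β) : Tendsto y atTop (𝓝 0) := by
  have hsq : Tendsto (fun t => y t ^ 2) atTop (𝓝 0) := by
    refine tendsto_zero_of_integrableOn_of_deriv_le (C := α * M ^ 2 / 2)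
      (fun t _ => sq_nonneg _) (fun t ht => (hs t ht).2.2.pow 2) (fun t ht => ?_)
      (hs.integrableOn_sq_velocity hF hα hβ)
    -- `2 y ẏ ≤ -2 α y (F + y) = α F² / 2 - α (2 y + F)² / 2`
    have := (hs t ht).1
    have hdamp : 0 ≤ β * y t ^ 2 / x t ^ 2 := by positivity
    have hdamp' : y t * (β * y t / x t ^ 2) = β * y t ^ 2 / x t ^ 2 := by ring
    have hFM : F (x t) ^ 2 ≤ M ^ 2 := sq_le_sq' (abs_le.1 (hM _)).1 (abs_le.1 (hM _)).2
    have hsq := mul_nonneg hα.le (sq_nonneg (2 * y t + F (x t)))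
    norm_num
    nlinarith
  have habs := hsq.sqrt
  simp only [Real.sqrt_sq_eq_abs, Real.sqrt_zero] at habs
  exact (tendsto_zero_iff_abs_tendsto_zero y).2 habs

lemma hasDerivAt_lienard (hs : IsForwardSolution α β F x y) {t : ℝ} (ht : 0 ≤ t) :
    HasDerivAt (fun s => y s + α * x s - β / x s) (-α * F (x t)) t := by
  obtain ⟨hx, hdx, hdy⟩ := hs t ht
  refine ((hdy.add (hdx.const_mul α)).sub ((hasDerivAt_const t β).div hdx hx.ne')).congr_deriv ?_
  field_simp
  ring

lemma frequently_gt_of_lt (hs : IsForwardSolution α β F x y) (hF : IsRestoringForce F a)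
    (hy : Tendsto y atTop (𝓝 0)) (hα : 0 < α) (hβ : 0 ≤ β) {p : ℝ} (hpa : p < a) :
    ∃ᶠ t in atTop, p < x t := by
  by_contra h
  simp only [not_frequently, not_lt] at h
  obtain ⟨T, hT⟩ := eventually_atTop.1 (h.and (eventually_ge_atTop 0))
  have hFp : F p < 0 := hF.apply_eq_zero ▸ hF.strictMono hpa
  have hz := tendsto_atTop_of_le_deriv (mul_pos_of_neg_of_neg (neg_neg_of_pos hα) hFp)
    (fun t ht => hs.hasDerivAt_lienard (hT t ht).2) fun t ht => by
      have := hF.strictMono.monotone (hT t ht).1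
      nlinarith
  obtain ⟨t, hzt, hyt, ht⟩ := ((hz.eventually_gt_atTop (1 + α * p)).and
    ((hy.eventually (gt_mem_nhds one_pos)).and (eventually_ge_atTop T))).exists
  have := (hs t (hT t ht).2).1
  have : 0 ≤ β / x t := by positivity
  nlinarith [(hT t ht).1]

lemma frequently_lt_of_gt (hs : IsForwardSolution α β F x y) (hF : IsRestoringForce F a)
    (hy : Tendsto y atTop (𝓝 0)) (hα : 0 < α) (hβ : 0 ≤ β) {q : ℝ} (hq : 0 < q) (haq : a < q) :
    ∃ᶠ t in atTop, x t < q := by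
  by_contra h
  simp only [not_frequently, not_lt] at h
  obtain ⟨T, hT⟩ := eventually_atTop.1 (h.and (eventually_ge_atTop 0))
  have hFq : 0 < F q := hF.apply_eq_zero ▸ hF.strictMono haq
  have hz := tendsto_atTop_of_le_deriv (mul_pos hα hFq)
    (fun t ht => (hs.hasDerivAt_lienard (hT t ht).2).neg) fun t ht => by
      have := hF.strictMono.monotone (hT t ht).1
      nlinarith
  obtain ⟨t, hzt, hyt, ht⟩ := ((hz.eventually_gt_atTop (1 + β / q)).and
    ((hy.eventually (lt_mem_nhds neg_one_lt_zero)).and (eventually_ge_atTop T))).exists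
  have hxt := (hs t (hT t ht).2).1
  have : β / x t ≤ β / q := div_le_div_of_nonneg_left hβ hq (hT t ht).1
  simp only [Pi.neg_apply] at hzt
  nlinarith [(hT t ht).1]

lemma exists_energy_lt (hs : IsForwardSolution α β F x y) (hF : IsRestoringForce F a)
    (hy : Tendsto y atTop (𝓝 0)) (ha : 0 < a) (hα : 0 < α) (hβ : 0 ≤ β) {η : ℝ} (hη : 0 < η) :
    ∃ t ≥ 0, energy α a F x y t < η := by
  by_contra! hE
  have hnear : ∀ᶠ z in 𝓝 a, α * potential F a z < η / 2 := by
    have := ((continuous_potential hF.continuous).tendsto' a 0 potential_self).const_mul α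
    exact this.eventually_lt_const (by simpa using hη)
  obtain ⟨p, q, ⟨hpa, haq⟩, hpq⟩ := mem_nhds_iff_exists_Ioo_subset.1 hnear
  have hfar : ∀ᶠ t in atTop, 0 ≤ t ∧ x t ∉ Ioo p q := by
    filter_upwards [eventually_ge_atTop 0,
      (hy.pow 2).eventually_lt_const (by simpa using hη)] with t ht hyt
    refine ⟨ht, fun hx => ?_⟩
    have : α * potential F a (x t) < η / 2 := hpq hx
    have := hE t ht
    unfold energy at this
    linarith
  obtain ⟨T, hT⟩ := eventually_atTop.1 hfar
  rcases forall_le_or_forall_ge_of_continuousOn_Ici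
    (HasDerivAt.continuousOn fun t ht => (hs t (hT t ht).1).2.1) (hpa.trans haq)
    (fun t ht => (hT t ht).2) with hleft | hright
  · obtain ⟨t, hpt, ht⟩ :=
      ((hs.frequently_gt_of_lt hF hy hα hβ hpa).and_eventually (eventually_ge_atTop T)).exists
    exact (hleft t ht).not_gt hpt
  · obtain ⟨t, hqt, ht⟩ := ((hs.frequently_lt_of_gt hF hy hα hβ (ha.trans haq) haq).and_eventually
      (eventually_ge_atTop T)).exists
    exact (hright t ht).not_gt hqt

lemma tendsto_potential (hs : IsForwardSolution α β F x y) (hF : IsRestoringForce F a)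
    (hy : Tendsto y atTop (𝓝 0)) (ha : 0 < a) (hα : 0 < α) (hβ : 0 ≤ β) :
    Tendsto (fun t => potential F a (x t)) atTop (𝓝 0) := by
  refine tendsto_order.2 ⟨fun b hb => Eventually.of_forall fun t =>
    hb.trans_le (hF.potential_nonneg _), fun η hη => ?_⟩
  obtain ⟨T, hT, hET⟩ := hs.exists_energy_lt hF hy ha hα hβ (mul_pos hα hη)
  filter_upwards [eventually_ge_atTop T] with t ht
  have := hs.antitoneOn_energy (a := a) hF.continuous hα.le hβ hT (hT.trans ht) ht
  unfold energy at this hET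
  by_contra! h
  nlinarith [sq_nonneg (y t), mul_le_mul_of_nonneg_left h hα.le]

theorem tendsto_equilibrium (hs : IsForwardSolution α β F x y) (hF : IsRestoringForce F a)
    {M : ℝ} (hM : ∀ z, |F z| ≤ M) (ha : 0 < a) (hα : 0 < α) (hβ : 0 ≤ β) :
    Tendsto (fun t => (x t, y t)) atTop (𝓝 (a, 0)) :=
  have hy := hs.tendsto_velocity hF hM hα hβ
  (hF.tendsto_of_tendsto_potential (hs.tendsto_potential hF hy ha hα hβ)).prodMk_nhds hy

end IsForwardSolution

theorem global_asymptotic_stability_general (α β d v₀ : ℝ)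
    (hα : 0 < α) (hβ : 0 < β) (hd : 0 < d)
    (hv₀ : v₀ ∈ Set.Ioo 0 (1 + Real.tanh 2))
    (x y : ℝ → ℝ)
    (hsol : ∀ t : ℝ, 0 ≤ t →
      0 < x t ∧ HasDerivAt x (y t) t ∧
        HasDerivAt y (-α * (V (x t / d) - v₀ + y t) - β * y t / (x t) ^ 2) t) :
    Tendsto (fun t => (x t, y t)) atTop (𝓝 (xInf d v₀, 0)) := by
  set F := fun s => V (s / d) - v₀
  have hF : IsRestoringForce F (xInf d v₀) :=
    { continuous := by fun_prop
      strictMono := fun s t hst =>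
        sub_lt_sub_right (V_strictMono (div_lt_div_of_pos_right hst hd)) _
      apply_eq_zero := sub_eq_zero.2 (V_div_xInf hd.ne' hv₀) }
  have hM (z : ℝ) : |F z| ≤ 2 + |v₀| := (abs_sub _ _).trans (by linarith [abs_V_le (z / d)])
  exact IsForwardSolution.tendsto_equilibrium (F := F) hsol hF hM (xInf_pos hd hv₀) hα hβ.le

/-- the equilibrium `(x_∞, 0)` is globally asymptotically stable: any
solution of `ż = B(z)` in `S = (0,∞) × ℝ`, defined for all `t ≥ 0`, converges to
`(x_∞, 0)` as `t → ∞`. -/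
theorem global_asymptotic_stability (α β d v₀ : ℝ)
    (hα : 0 < α) (hβ : 0 < β) (hd : 0 < d)
    (hv₀ : v₀ ∈ Set.Ioo 0 (1 + Real.tanh 2))
    (x y : ℝ → ℝ)
    (x₀ y₀ : ℝ) (hx₀ : 0 < x₀) (hinit : x 0 = x₀ ∧ y 0 = y₀)
    (hsol : ∀ t : ℝ, 0 ≤ t →
      0 < x t ∧ HasDerivAt x (y t) t ∧
        HasDerivAt y (-α * (V (x t / d) - v₀ + y t) - β * y t / (x t) ^ 2) t) :
    Tendsto (fun t => (x t, y t)) atTop (𝓝 (xInf d v₀, 0)) :=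
  global_asymptotic_stability_general α β d v₀ hα hβ hd hv₀ x y hsol
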